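/- arXiv:1406.3801 — 2 statements merged into one kernel-verified Lean document; each statement's English description precedes it below -/
import Mathlib

section
/- For every nonnegative integer n, the number of overpartitions satisfies p̄(n) ≡ (-1)^n · p̄(4n) (mod 8). -/
/-- The number of overpartitions of `n`: pairs `(λ, μ)` where `λ` is a partition of some
`m ≤ n` into distinct parts and `μ` is an ordinary partition of `n - m`. -/
def overpartition (n : ℕ) : ℕ :=
  ∑ m ∈ Finset.range (n + 1),
    (Nat.Partition.distincts m).card * Fintype.card (Nat.Partition (n - m))

/-!
The generating function of overpartitions is `∏ (1 + qⁿ) / (1 - qⁿ) = 1 / φ(-q)`, where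
`φ(-q) = 1 + 2 ∑_{s ≥ 1} (-1)ˢ q^{s²}` by Gauss. Hence
`p̄(n) = 2 ∑_{s ≥ 1} (-1)^{s+1} p̄(n - s²)` for `n ≥ 1`. So `p̄(n)` is even for `n ≥ 1`, and
divisible by `4` when `n ≡ 3 (mod 4)`, since then every `n - s²` is `≡ 2, 3 (mod 4)`. In the
recurrence for `p̄(4n)` the odd `s` therefore contribute `0 (mod 8)`, while by induction the even
`s = 2t` contribute `(-1)ⁿ` times the recurrence for `p̄(n)`.

Gauss's identity is proved modulo `X^{N+1}`: the `q`-binomial theorem at `q = X²` gives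
`∏_{k<N} (1 - X^{2k+1})² = ∑_{|j| ≤ N} (-1)ʲ X^{j²} [2N, N+j]_{X²}`, and
`[2N, N+j]_{X²} · ∏_{k<N} (1 - X^{2k+2}) ≡ 1 (mod X^{2(N-|j|)+2})`.
-/

open Finset

section GaussianBinomial

variable {R : Type*} [CommRing R] (q : R)

def qBinomial : ℕ → ℕ → R
  | _, 0 => 1
  | 0, _ + 1 => 0
  | m + 1, k + 1 => qBinomial m (k + 1) + q ^ (m - k) * qBinomial m k

@[simp]
lemma qBinomial_zero_right (m : ℕ) : qBinomial q m 0 = 1 := by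
  cases m <;> rfl

lemma qBinomial_succ_succ (m k : ℕ) :
    qBinomial q (m + 1) (k + 1) = qBinomial q m (k + 1) + q ^ (m - k) * qBinomial q m k :=
  rfl

lemma qBinomial_eq_zero_of_lt : ∀ {m k : ℕ}, m < k → qBinomial q m k = 0
  | 0, _ + 1, _ => rfl
  | m + 1, k + 1, h => by
    rw [qBinomial_succ_succ, qBinomial_eq_zero_of_lt (by omega),
      qBinomial_eq_zero_of_lt (m := m) (by omega), mul_zero, add_zero]

@[simp]
lemma qBinomial_self : ∀ m : ℕ, qBinomial q m m = 1
  | 0 => rfl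
  | m + 1 => by
    rw [qBinomial_succ_succ, qBinomial_eq_zero_of_lt q m.lt_succ_self, qBinomial_self m,
      Nat.sub_self, pow_zero, one_mul, zero_add]

/-- `(q^{c+1}; q)_{d-c} = ∏_{c < k ≤ d} (1 - q^k)`; in particular `qProd q 0 d = (q; q)_d`. -/
def qProd (c d : ℕ) : R := ∏ k ∈ Ico c d, (1 - q ^ (k + 1))

lemma qProd_self (c : ℕ) : qProd q c c = 1 := by simp [qProd]

lemma qProd_mul_qProd {c d e : ℕ} (hcd : c ≤ d) (hde : d ≤ e) :
    qProd q c d * qProd q d e = qProd q c e :=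
  prod_Ico_consecutive _ hcd hde

lemma qProd_succ_right {c d : ℕ} (h : c ≤ d) :
    qProd q c (d + 1) = qProd q c d * (1 - q ^ (d + 1)) :=
  prod_Ico_succ_top h _

lemma qProd_eq_mul_qProd_succ {c d : ℕ} (h : c < d) :
    qProd q c d = (1 - q ^ (c + 1)) * qProd q (c + 1) d :=
  prod_eq_prod_Ico_succ_bot h _

theorem qBinomial_add_mul_qProd_right : ∀ a b : ℕ,
    qBinomial q (a + b) a * qProd q 0 b = qProd q a (a + b)
  | a, 0 => by simp [qProd_self]
  | 0, b + 1 => by simp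
  | a + 1, b + 1 => by
    have ih₁ := qBinomial_add_mul_qProd_right (a + 1) b
    have ih₂ := qBinomial_add_mul_qProd_right a (b + 1)
    rw [show a + 1 + b = a + b + 1 by omega] at ih₁
    rw [show a + (b + 1) = a + b + 1 by omega, qProd_succ_right q (Nat.zero_le b),
      qProd_eq_mul_qProd_succ q (c := a) (by omega)] at ih₂
    rw [show a + 1 + (b + 1) = a + b + 1 + 1 by omega, qBinomial_succ_succ,
      show a + b + 1 - a = b + 1 by omega, qProd_succ_right q (Nat.zero_le b),
      qProd_succ_right q (by omega)]
    linear_combination (1 - q ^ (b + 1)) * ih₁ + q ^ (b + 1) * ih₂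

theorem qBinomial_add_mul_qProd_left : ∀ a b : ℕ,
    qBinomial q (a + b) a * qProd q 0 a = qProd q b (a + b)
  | 0, b => by simp [qProd_self]
  | a + 1, 0 => by simp
  | a + 1, b + 1 => by
    have ih₁ := qBinomial_add_mul_qProd_left (a + 1) b
    have ih₂ := qBinomial_add_mul_qProd_left a (b + 1)
    rw [show a + 1 + b = a + b + 1 by omega] at ih₁
    rw [show a + (b + 1) = a + b + 1 by omega] at ih₂
    rw [show a + 1 + (b + 1) = a + b + 1 + 1 by omega, qBinomial_succ_succ,
      show a + b + 1 - a = b + 1 by omega, qProd_succ_right q (by omega),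
      qProd_succ_right q (by omega)]
    rw [qProd_succ_right q (Nat.zero_le a), qProd_eq_mul_qProd_succ q (c := b) (by omega)] at ih₁
    linear_combination ih₁ + q ^ (b + 1) * (1 - q ^ (a + 1)) * ih₂

/-- Rothe's `q`-binomial theorem, in homogeneous form. -/
theorem prod_add_pow_mul_eq_sum_qBinomial (y w : R) : ∀ m : ℕ,
    ∏ k ∈ range m, (y + q ^ k * w) =
      ∑ i ∈ range (m + 1), q ^ i.choose 2 * qBinomial q m i * w ^ i * y ^ (m - i)
  | 0 => by simp
  | m + 1 => by
    have hy : ∑ k ∈ range (m + 1), q ^ (k + 1).choose 2 * qBinomial q m (k + 1) * w ^ (k + 1) *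
          y ^ (m - k) + y ^ (m + 1) =
        y * ∑ i ∈ range (m + 1), q ^ i.choose 2 * qBinomial q m i * w ^ i * y ^ (m - i) := by
      rw [sum_range_succ, qBinomial_eq_zero_of_lt q m.lt_succ_self, sum_range_succ' _ m,
        mul_add, mul_sum]
      simp only [mul_zero, zero_mul, add_zero, Nat.choose_zero_succ, pow_zero,
        qBinomial_zero_right, one_mul, Nat.sub_zero, ← pow_succ']
      congr 1
      refine sum_congr rfl fun k hk => ?_
      rw [show m - k = m - (k + 1) + 1 by grind, pow_succ]
      ring
    have hw : ∑ k ∈ range (m + 1), q ^ (k + 1).choose 2 * (q ^ (m - k) * qBinomial q m k) *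
          w ^ (k + 1) * y ^ (m - k) =
        q ^ m * w *
          ∑ i ∈ range (m + 1), q ^ i.choose 2 * qBinomial q m i * w ^ i * y ^ (m - i) := by
      rw [mul_sum]
      refine sum_congr rfl fun k hk => ?_
      have : (k + 1).choose 2 + (m - k) = k.choose 2 + m := by
        rw [Nat.choose_succ_succ', Nat.choose_one_right]; grind
      rw [pow_succ]
      linear_combination (qBinomial q m k * w ^ k * w * y ^ (m - k)) * congrArg (q ^ ·) this
    rw [prod_range_succ, prod_add_pow_mul_eq_sum_qBinomial y w m, sum_range_succ' _ (m + 1)]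
    simp only [qBinomial_succ_succ, mul_add, add_mul, sum_add_distrib, Nat.add_sub_add_right]
    simp only [qBinomial_zero_right, Nat.choose_zero_succ, pow_zero, one_mul, Nat.sub_zero]
    linear_combination -hy - hw

end GaussianBinomial

section PowerSeries

open PowerSeries

variable {R : Type*} [CommRing R]

theorem SModEq.prod_one {A ι : Type*} [CommRing A] {I : Ideal A} {s : Finset ι} {f : ι → A}
    (h : ∀ i ∈ s, f i ≡ 1 [SMOD I]) : ∏ i ∈ s, f i ≡ 1 [SMOD I] := by
  simpa using SModEq.prod h

theorem smodEq_X_pow_iff {k : ℕ} {a b : R⟦X⟧} :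
    a ≡ b [SMOD Ideal.span {X ^ k}] ↔ ∀ m < k, coeff m a = coeff m b := by
  simp_rw [SModEq.sub_mem, Ideal.mem_span_singleton, X_pow_dvd_iff, map_sub, sub_eq_zero]

theorem X_pow_smodEq_zero {k e : ℕ} (h : k ≤ e) : (X ^ e : R⟦X⟧) ≡ 0 [SMOD Ideal.span {X ^ k}] :=
  SModEq.zero.2 (Ideal.mem_span_singleton.2 (pow_dvd_pow X h))

theorem SModEq.X_pow_mul {k e : ℕ} {a b : R⟦X⟧} (h : a ≡ b [SMOD Ideal.span {X ^ k}]) :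
    X ^ e * a ≡ X ^ e * b [SMOD Ideal.span {X ^ (e + k)}] := by
  rw [SModEq.sub_mem, Ideal.mem_span_singleton] at h ⊢
  rw [← mul_sub, pow_add]
  exact mul_dvd_mul_left _ h

theorem SModEq.of_X_pow_le {k l : ℕ} {a b : R⟦X⟧} (h : a ≡ b [SMOD Ideal.span {X ^ l}])
    (hkl : k ≤ l) : a ≡ b [SMOD Ideal.span {X ^ k}] :=
  h.mono (Ideal.span_singleton_le_span_singleton.2 (pow_dvd_pow X hkl))

theorem qProd_X_pow_smodEq_one {k a c : ℕ} (d : ℕ) (h : k ≤ a * (c + 1)) :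
    qProd (X ^ a : R⟦X⟧) c d ≡ 1 [SMOD Ideal.span {X ^ k}] := by
  refine SModEq.prod_one fun i hi => ?_
  have hk : k ≤ a * (i + 1) := h.trans (Nat.mul_le_mul_left a (by grind))
  rw [← pow_mul]
  simpa using (SModEq.refl 1).sub (X_pow_smodEq_zero (R := R) hk)

theorem qBinomial_X_sq_mul_qProd_smodEq_one {N i : ℕ} (hi : i ≤ 2 * N) :
    qBinomial (X ^ 2 : R⟦X⟧) (2 * N) i * qProd (X ^ 2) 0 N ≡ 1
      [SMOD Ideal.span {X ^ (2 * min i (2 * N - i) + 2)}] := by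
  set k := 2 * min i (2 * N - i) + 2
  have h2N : i + (2 * N - i) = 2 * N := by omega
  rcases le_total i N with hiN | hNi
  · have hbin := qBinomial_add_mul_qProd_left (X ^ 2 : R⟦X⟧) i (2 * N - i)
    rw [h2N] at hbin
    rw [← qProd_mul_qProd _ (Nat.zero_le i) hiN, ← mul_assoc, hbin]
    have h₁ := qProd_X_pow_smodEq_one (R := R) (a := 2) (k := k) (c := 2 * N - i) (2 * N) (by omega)
    have h₂ := qProd_X_pow_smodEq_one (R := R) (a := 2) (k := k) (c := i) N (by omega)
    simpa using h₁.mul h₂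
  · have hbin := qBinomial_add_mul_qProd_right (X ^ 2 : R⟦X⟧) i (2 * N - i)
    rw [h2N] at hbin
    rw [← qProd_mul_qProd _ (Nat.zero_le (2 * N - i)) (by omega : 2 * N - i ≤ N), ← mul_assoc,
      hbin]
    have h₁ := qProd_X_pow_smodEq_one (R := R) (a := 2) (k := k) (c := i) (2 * N) (by omega)
    have h₂ := qProd_X_pow_smodEq_one (R := R) (a := 2) (k := k) (c := 2 * N - i) N (by omega)
    simpa using h₁.mul h₂

noncomputable def oddProd (N : ℕ) : R⟦X⟧ := ∏ k ∈ range N, (1 - X ^ (2 * k + 1))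

theorem prod_range_two_mul_X_pow_sub (N : ℕ) :
    ∏ k ∈ range (2 * N), (X ^ (2 * N + 1) + (X ^ 2) ^ k * -X ^ 2 : R⟦X⟧) =
      (-1) ^ N * X ^ (3 * N ^ 2 + 2 * N) * oddProd N ^ 2 := by
  have hlow : ∏ k ∈ range N, (X ^ (2 * N + 1) + (X ^ 2) ^ k * -X ^ 2 : R⟦X⟧) =
      (-1) ^ N * X ^ (N ^ 2 + N) * oddProd N := by
    have hmono : ∏ k ∈ range N, (-X ^ (2 * k + 2) : R⟦X⟧) = (-1) ^ N * X ^ (N ^ 2 + N) := by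
      induction N with
      | zero => simp
      | succ N ih => rw [prod_range_succ, ih]; ring
    rw [oddProd, ← prod_range_reflect (fun k => 1 - X ^ (2 * k + 1)), ← hmono,
      ← prod_mul_distrib]
    refine prod_congr rfl fun k hk => ?_
    rw [show 2 * N + 1 = 2 * k + 2 + (2 * (N - 1 - k) + 1) by grind]
    ring
  have hhigh : ∏ k ∈ range N, (X ^ (2 * N + 1) + (X ^ 2) ^ (N + k) * -X ^ 2 : R⟦X⟧) =
      X ^ (2 * N ^ 2 + N) * oddProd N := by
    have hfactor : ∀ k ∈ range N, (X ^ (2 * N + 1) + (X ^ 2) ^ (N + k) * -X ^ 2 : R⟦X⟧) =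
        X ^ (2 * N + 1) * (1 - X ^ (2 * k + 1)) := fun k _ => by ring
    rw [prod_congr rfl hfactor, prod_mul_distrib, prod_const, card_range, oddProd]
    ring
  rw [show range (2 * N) = range (N + N) by rw [two_mul], prod_range_add, hlow, hhigh]
  ring

theorem neg_one_pow_natAbs_sub (i N : ℕ) :
    (-1 : R) ^ i = (-1) ^ N * (-1) ^ ((i : ℤ) - N).natAbs := by
  rw [← pow_add, neg_one_pow_eq_pow_mod_two, neg_one_pow_eq_pow_mod_two (n := _ + _)]
  congr 1
  omega

theorem oddProd_sq_eq_sum (N : ℕ) :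
    oddProd N ^ 2 = ∑ i ∈ range (2 * N + 1), (-1) ^ ((i : ℤ) - N).natAbs *
      X ^ (((i : ℤ) - N).natAbs ^ 2) * qBinomial (X ^ 2 : R⟦X⟧) (2 * N) i := by
  have h := prod_add_pow_mul_eq_sum_qBinomial (X ^ 2 : R⟦X⟧) (X ^ (2 * N + 1)) (-X ^ 2) (2 * N)
  rw [prod_range_two_mul_X_pow_sub, mul_assoc] at h
  have hterm : ∀ i ∈ range (2 * N + 1), (X ^ 2 : R⟦X⟧) ^ i.choose 2 *
      qBinomial (X ^ 2) (2 * N) i * (-X ^ 2) ^ i * (X ^ (2 * N + 1)) ^ (2 * N - i) =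
      (-1) ^ N * (X ^ (3 * N ^ 2 + 2 * N) * ((-1) ^ ((i : ℤ) - N).natAbs *
        X ^ (((i : ℤ) - N).natAbs ^ 2) * qBinomial (X ^ 2) (2 * N) i)) := by
    intro i hi
    have hexp : 2 * i.choose 2 + 2 * i + (2 * N + 1) * (2 * N - i) =
        3 * N ^ 2 + 2 * N + ((i : ℤ) - N).natAbs ^ 2 := by
      have : i ≤ 2 * N := by grind
      qify [this]
      rw [Nat.cast_choose_two, sq_abs]
      ring
    rw [neg_pow, neg_one_pow_natAbs_sub i N, ← pow_mul, ← pow_mul, ← pow_mul]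
    linear_combination (-1) ^ N * (-1) ^ ((i : ℤ) - N).natAbs * qBinomial (X ^ 2 : R⟦X⟧) (2 * N) i *
      (congrArg (X ^ · : ℕ → R⟦X⟧) hexp).trans (pow_add _ _ _)
  rw [sum_congr rfl hterm, ← mul_sum, ← mul_sum] at h
  exact X_pow_mul_cancel ((isUnit_neg_one.pow N).mul_left_cancel h)

theorem sum_range_natAbs_sub {M : Type*} [AddCommMonoid M] (f : ℕ → M) (N : ℕ) :
    ∑ i ∈ range (2 * N + 1), f ((i : ℤ) - N).natAbs = f 0 + 2 • ∑ s ∈ range N, f (s + 1) := by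
  have hlow : ∑ i ∈ range N, f ((i : ℤ) - N).natAbs = ∑ s ∈ range N, f (s + 1) := by
    rw [← sum_range_reflect]
    refine sum_congr rfl fun s hs => ?_
    congr 1
    grind
  have hhigh : ∑ s ∈ range N, f (((N + (s + 1) : ℕ) : ℤ) - N).natAbs = ∑ s ∈ range N, f (s + 1) :=
    sum_congr rfl fun s _ => by congr 1; omega
  rw [show 2 * N + 1 = N + (N + 1) by omega, sum_range_add, sum_range_succ', hlow, hhigh,
    two_nsmul]
  simp only [add_zero, sub_self, Int.natAbs_zero]
  abel

theorem oddProd_sq_mul_qProd_smodEq (N : ℕ) :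
    oddProd N ^ 2 * qProd (X ^ 2 : R⟦X⟧) 0 N ≡
      1 + 2 * ∑ s ∈ range N, (-1) ^ (s + 1) * X ^ ((s + 1) ^ 2)
      [SMOD Ideal.span {X ^ (N + 1)}] := by
  have hpair := sum_range_natAbs_sub (fun d => (-1) ^ d * X ^ (d ^ 2) : ℕ → R⟦X⟧) N
  simp only [pow_zero, ne_eq, OfNat.ofNat_ne_zero, not_false_eq_true, zero_pow, mul_one,
    two_nsmul, ← two_mul] at hpair
  rw [← hpair, oddProd_sq_eq_sum, sum_mul]
  refine SModEq.sum fun i hmem => ?_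
  have hi : i ≤ 2 * N := by grind
  have hbound : N + 1 ≤ ((i : ℤ) - N).natAbs ^ 2 + (2 * min i (2 * N - i) + 2) := by
    have hmin : min i (2 * N - i) = N - ((i : ℤ) - N).natAbs := by omega
    have hd : ((i : ℤ) - N).natAbs ≤ N := by omega
    rw [hmin]
    zify [hd]
    nlinarith [sq_nonneg ((((i : ℤ) - N).natAbs : ℤ) - 1)]
  have h := (SModEq.refl ((-1 : R⟦X⟧) ^ ((i : ℤ) - N).natAbs)).mul
    ((qBinomial_X_sq_mul_qProd_smodEq_one hi).X_pow_mul.of_X_pow_le hbound)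
  rwa [mul_one, ← mul_assoc, ← mul_assoc] at h

theorem qProd_X_sq_eq_mul (N : ℕ) :
    qProd (X ^ 2 : R⟦X⟧) 0 N = qProd X 0 N * ∏ k ∈ range N, (1 + X ^ (k + 1)) := by
  rw [qProd, qProd, ← range_eq_Ico, ← prod_mul_distrib]
  exact prod_congr rfl fun k _ => by ring

theorem oddProd_mul_qProd_X_sq :
    ∀ N : ℕ, oddProd N * qProd (X ^ 2 : R⟦X⟧) 0 N = qProd X 0 (2 * N)
  | 0 => by simp [oddProd, qProd_self]
  | N + 1 => by
    rw [oddProd, prod_range_succ, ← oddProd, qProd_succ_right _ (Nat.zero_le N),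
      show 2 * (N + 1) = 2 * N + 1 + 1 by ring, qProd_succ_right _ (by omega),
      qProd_succ_right _ (by omega), ← oddProd_mul_qProd_X_sq N]
    ring

theorem qProd_X_mul_prod_geom_sum_smodEq_one (N : ℕ) :
    qProd (X : R⟦X⟧) 0 N * ∏ k ∈ range N, ∑ j ∈ range (N + 1), X ^ ((k + 1) * j) ≡ 1
      [SMOD Ideal.span {X ^ (N + 1)}] := by
  rw [qProd, ← range_eq_Ico, ← prod_mul_distrib]
  refine SModEq.prod_one fun k _ => ?_
  simp_rw [pow_mul]
  rw [mul_neg_geom_sum, ← pow_mul]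
  have hk : N + 1 ≤ (k + 1) * (N + 1) := Nat.le_mul_of_pos_left _ k.succ_pos
  simpa using (SModEq.refl 1).sub (X_pow_smodEq_zero (R := R) hk)

theorem oddProd_sq_mul_qProd_mul_smodEq_one (N : ℕ) :
    oddProd N ^ 2 * qProd (X ^ 2 : R⟦X⟧) 0 N *
      ((∏ k ∈ range N, (1 + X ^ (k + 1))) * ∏ k ∈ range N, ∑ j ∈ range (N + 1), X ^ ((k + 1) * j))
      ≡ 1 [SMOD Ideal.span {X ^ (N + 1)}] := by
  set D := ∏ k ∈ range N, (1 + X ^ (k + 1) : R⟦X⟧)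
  set G := ∏ k ∈ range N, ∑ j ∈ range (N + 1), (X ^ ((k + 1) * j) : R⟦X⟧)
  have hE : qProd (X : R⟦X⟧) 0 (2 * N) ≡ qProd X 0 N [SMOD Ideal.span {X ^ (N + 1)}] := by
    rw [← qProd_mul_qProd (X : R⟦X⟧) (Nat.zero_le N) (by omega : N ≤ 2 * N)]
    simpa using (SModEq.refl (qProd (X : R⟦X⟧) 0 N)).mul
      (qProd_X_pow_smodEq_one (R := R) (a := 1) (k := N + 1) (c := N) (2 * N) (by omega))
  have hO : oddProd N ^ 2 * qProd (X ^ 2 : R⟦X⟧) 0 N * (D * G) =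
      oddProd N * D * G * qProd X 0 (2 * N) := by
    rw [← oddProd_mul_qProd_X_sq]; ring
  have hO' : oddProd N * D * G * qProd X 0 N = qProd X 0 (2 * N) * G := by
    rw [← oddProd_mul_qProd_X_sq, qProd_X_sq_eq_mul]; ring
  rw [hO]
  refine ((SModEq.refl _).mul hE).trans ?_
  rw [hO']
  exact (hE.mul (SModEq.refl _)).trans (qProd_X_mul_prod_geom_sum_smodEq_one N)

end PowerSeries

section Partitions

open PowerSeries Nat.Partition
open scoped PowerSeries.WithPiTopology

theorem HasProd.smodEq_prod_range {R : Type*} [CommRing R] [TopologicalSpace R] [T2Space R]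
    {f : ℕ → R⟦X⟧} {a : R⟦X⟧} (h : HasProd f a) {k N : ℕ}
    (hf : ∀ i, N ≤ i → f i ≡ 1 [SMOD Ideal.span {X ^ k}]) :
    a ≡ ∏ i ∈ range N, f i [SMOD Ideal.span {X ^ k}] := by
  have hclosed : IsClosed {b : R⟦X⟧ | b ≡ ∏ i ∈ range N, f i [SMOD Ideal.span {X ^ k}]} := by
    simp_rw [smodEq_X_pow_iff, Set.ofPred_forall]
    exact isClosed_iInter fun m => isClosed_iInter fun _ =>
      isClosed_eq (WithPiTopology.continuous_coeff R m) continuous_const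
  refine hclosed.mem_of_tendsto h.tendsto_prod_nat (Filter.eventually_atTop.2 ⟨N, fun M hM => ?_⟩)
  rw [Set.mem_ofPred_eq, ← prod_range_mul_prod_Ico f hM]
  simpa using (SModEq.refl _).mul (SModEq.prod_one fun i hi => hf i (mem_Ico.1 hi).1)

theorem mk_overpartition_eq_mul :
    PowerSeries.mk (fun n => (overpartition n : ℤ)) =
      PowerSeries.mk (fun n => (#(distincts n) : ℤ)) *
        PowerSeries.mk (fun n => (Fintype.card n.Partition : ℤ)) := by
  ext n
  simp only [coeff_mk, coeff_mul, Nat.sum_antidiagonal_eq_sum_range_succ_mk, overpartition]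
  push_cast
  rfl

theorem mk_card_distincts_smodEq (N : ℕ) :
    PowerSeries.mk (fun n => (#(distincts n) : ℤ)) ≡ ∏ k ∈ range N, (1 + X ^ (k + 1))
      [SMOD Ideal.span {X ^ (N + 1)}] := by
  have h := hasProd_powerSeriesMk_card_countRestricted ℤ (m := 2) two_pos
  simp only [countRestricted_two, sum_range_succ, sum_range_zero, mul_zero, mul_one, pow_zero,
    zero_add] at h
  refine h.smodEq_prod_range fun i hi => ?_
  simpa using (SModEq.refl 1).add (X_pow_smodEq_zero (R := ℤ) (by omega : N + 1 ≤ i + 1))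

theorem card_countRestricted_of_lt {n m : ℕ} (h : n < m) :
    #(countRestricted n m) = Fintype.card n.Partition := by
  rw [countRestricted, filter_true_of_mem, card_univ]
  intro p _ i _
  have hcard : Multiset.card p.parts ≤ n := by
    simpa [p.parts_sum] using Multiset.card_nsmul_le_sum fun x hx => p.parts_pos hx
  exact (Multiset.count_le_card i p.parts).trans_lt (hcard.trans_lt h)

theorem mk_card_partition_smodEq (N : ℕ) :
    PowerSeries.mk (fun n => (Fintype.card n.Partition : ℤ)) ≡
      ∏ k ∈ range N, ∑ j ∈ range (N + 1), X ^ ((k + 1) * j) [SMOD Ideal.span {X ^ (N + 1)}] := by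
  have h := hasProd_powerSeriesMk_card_countRestricted ℤ (m := N + 1) N.succ_pos
  have hmk : PowerSeries.mk (fun n => (Fintype.card n.Partition : ℤ)) ≡
      PowerSeries.mk (fun n => (#(countRestricted n (N + 1)) : ℤ))
      [SMOD Ideal.span {X ^ (N + 1)}] :=
    smodEq_X_pow_iff.2 fun m hm => by simp [card_countRestricted_of_lt hm]
  refine hmk.trans (h.smodEq_prod_range fun i hi => ?_)
  rw [sum_range_succ', mul_zero, pow_zero]
  have hj : ∀ j ∈ range N, (X ^ ((i + 1) * (j + 1)) : ℤ⟦X⟧) ≡ 0 [SMOD Ideal.span {X ^ (N + 1)}] :=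
    fun j _ => X_pow_smodEq_zero (by nlinarith)
  simpa using (SModEq.sum hj).add (SModEq.refl 1)

theorem truncTheta_mul_mk_overpartition_smodEq_one (N : ℕ) :
    (1 + 2 * ∑ s ∈ range N, (-1) ^ (s + 1) * X ^ ((s + 1) ^ 2) : ℤ⟦X⟧) *
      PowerSeries.mk (fun n => (overpartition n : ℤ)) ≡ 1 [SMOD Ideal.span {X ^ (N + 1)}] := by
  rw [mk_overpartition_eq_mul]
  have htheta := (oddProd_sq_mul_qProd_smodEq (R := ℤ) N).symm
  have hcount := (mk_card_distincts_smodEq N).mul (mk_card_partition_smodEq N)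
  exact (htheta.mul hcount).trans (oddProd_sq_mul_qProd_mul_smodEq_one N)

theorem overpartition_eq_two_mul_sum {n N : ℕ} (hn : 1 ≤ n) (hN : n ≤ N) :
    (overpartition n : ℤ) = 2 * ∑ s ∈ range N,
      (-1) ^ s * if (s + 1) ^ 2 ≤ n then (overpartition (n - (s + 1) ^ 2) : ℤ) else 0 := by
  have h := smodEq_X_pow_iff.1 (truncTheta_mul_mk_overpartition_smodEq_one N) n
    (Nat.lt_succ_of_le hN)
  set P := PowerSeries.mk (fun n => (overpartition n : ℤ))
  have hterm : ∀ s : ℕ, (2 : ℤ⟦X⟧) * ((-1) ^ (s + 1) * X ^ ((s + 1) ^ 2)) * P =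
      C (2 * (-1) ^ (s + 1)) * (X ^ ((s + 1) ^ 2) * P) := fun s => by
    simp only [map_mul, map_pow, map_neg, map_one, map_ofNat]; ring
  rw [mul_sum, add_mul, one_mul, sum_mul, map_add, map_sum] at h
  simp only [hterm, coeff_C_mul, coeff_X_pow_mul', P, coeff_mk, coeff_one] at h
  rw [if_neg (Nat.one_le_iff_ne_zero.1 hn)] at h
  have hsign : ∑ s ∈ range N, 2 * (-1) ^ (s + 1) *
      (if (s + 1) ^ 2 ≤ n then (overpartition (n - (s + 1) ^ 2) : ℤ) else 0) =
      -(2 * ∑ s ∈ range N, (-1) ^ s *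
        if (s + 1) ^ 2 ≤ n then (overpartition (n - (s + 1) ^ 2) : ℤ) else 0) := by
    rw [mul_sum, ← sum_neg_distrib]
    exact sum_congr rfl fun s _ => by ring
  linear_combination h - hsign

end Partitions

theorem sq_mod_four_le_one (m : ℕ) : m ^ 2 % 4 ≤ 1 := by
  rw [Nat.pow_mod]
  have : m % 4 < 4 := Nat.mod_lt m (by norm_num)
  interval_cases m % 4 <;> decide

theorem sq_mod_two (m : ℕ) : m ^ 2 % 2 = m % 2 := by
  rw [Nat.pow_mod]
  have : m % 2 < 2 := Nat.mod_lt m (by norm_num)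
  interval_cases m % 2 <;> decide

theorem neg_one_pow_two_mul_add_one_mul_neg_one_pow_sub_sq {R : Type*} [Ring R] {n t : ℕ}
    (h : (t + 1) ^ 2 ≤ n) :
    (-1 : R) ^ (2 * t + 1) * (-1) ^ (n - (t + 1) ^ 2) = (-1) ^ n * (-1) ^ t := by
  rw [← pow_add, ← pow_add, neg_one_pow_eq_pow_mod_two, neg_one_pow_eq_pow_mod_two (n := n + t)]
  have := sq_mod_two (t + 1)
  congr 1
  omega

theorem sum_range_two_mul {M : Type*} [AddCommMonoid M] (f : ℕ → M) (n : ℕ) :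
    ∑ s ∈ range (2 * n), f s = ∑ t ∈ range n, f (2 * t) + ∑ t ∈ range n, f (2 * t + 1) := by
  induction n with
  | zero => simp
  | succ n ih =>
    rw [show 2 * (n + 1) = 2 * n + 1 + 1 by ring, sum_range_succ, sum_range_succ, ih,
      sum_range_succ, sum_range_succ]
    abel

theorem two_dvd_overpartition {n : ℕ} (hn : 1 ≤ n) : (2 : ℤ) ∣ overpartition n := by
  rw [overpartition_eq_two_mul_sum hn le_rfl]
  exact dvd_mul_right 2 _

theorem four_dvd_overpartition {n : ℕ} (hn : n % 4 = 3) : (4 : ℤ) ∣ overpartition n := by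
  rw [overpartition_eq_two_mul_sum (by omega) le_rfl, show (4 : ℤ) = 2 * 2 by norm_num]
  refine mul_dvd_mul_left 2 (dvd_sum fun s _ => dvd_mul_of_dvd_right ?_ _)
  split_ifs with hs
  · have := sq_mod_four_le_one (s + 1)
    exact two_dvd_overpartition (by omega)
  · exact dvd_zero 2

theorem two_mul_overpartition_four_mul_sub_odd_sq {n t : ℕ} (h : (2 * t + 1) ^ 2 ≤ 4 * n) :
    (2 * overpartition (4 * n - (2 * t + 1) ^ 2) : ZMod 8) = 0 := by
  have hsq : (2 * t + 1) ^ 2 = 4 * (t ^ 2 + t) + 1 := by ring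
  obtain ⟨k, hk⟩ := four_dvd_overpartition (n := 4 * n - (2 * t + 1) ^ 2) (by omega)
  have h8 : ((2 * overpartition (4 * n - (2 * t + 1) ^ 2) : ℤ) : ZMod 8) = 0 :=
    (ZMod.intCast_zmod_eq_zero_iff_dvd _ 8).2 ⟨k, by rw [hk]; ring⟩
  exact_mod_cast h8

theorem overpartition_four_mul (n : ℕ) :
    (overpartition (4 * n) : ZMod 8) = (-1) ^ n * overpartition n := by
  induction n using Nat.strong_induction_on with
  | _ n ih =>
  rcases Nat.eq_zero_or_pos n with rfl | hn
  · simp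
  have h4n := congrArg (Int.cast : ℤ → ZMod 8)
    (overpartition_eq_two_mul_sum (n := 4 * n) (N := 2 * (2 * n)) (by omega) (by omega))
  have hn' := congrArg (Int.cast : ℤ → ZMod 8)
    (overpartition_eq_two_mul_sum (n := n) (N := 2 * n) hn (by omega))
  push_cast at h4n hn'
  rw [sum_range_two_mul, mul_add] at h4n
  have hodd : (2 : ZMod 8) * ∑ t ∈ range (2 * n), ((-1) ^ (2 * t) *
      if (2 * t + 1) ^ 2 ≤ 4 * n then (overpartition (4 * n - (2 * t + 1) ^ 2) : ZMod 8)
      else 0) = 0 := by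
    rw [mul_sum]
    refine sum_eq_zero fun t _ => ?_
    split_ifs with ht
    · rw [mul_left_comm, two_mul_overpartition_four_mul_sub_odd_sq ht, mul_zero]
    · rw [mul_zero, mul_zero]
  have heven : ∀ t ∈ range (2 * n), ((-1) ^ (2 * t + 1) *
      if (2 * t + 1 + 1) ^ 2 ≤ 4 * n then (overpartition (4 * n - (2 * t + 1 + 1) ^ 2) : ZMod 8)
      else 0) = (-1) ^ n * ((-1) ^ t *
      if (t + 1) ^ 2 ≤ n then (overpartition (n - (t + 1) ^ 2) : ZMod 8) else 0) := by
    intro t _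
    have hsq : (2 * t + 1 + 1) ^ 2 = 4 * (t + 1) ^ 2 := by ring
    rw [hsq, show 4 * n - 4 * (t + 1) ^ 2 = 4 * (n - (t + 1) ^ 2) by omega]
    split_ifs with h₁ h₂ h₂
    · have hlt : n - (t + 1) ^ 2 < n := Nat.sub_lt hn (by positivity)
      rw [ih _ hlt, ← mul_assoc, ← mul_assoc,
        neg_one_pow_two_mul_add_one_mul_neg_one_pow_sub_sq h₂]
    · omega
    · omega
    · simp
  rw [hodd, zero_add, sum_congr rfl heven, ← mul_sum] at h4n
  rw [h4n, hn']
  ring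

theorem overpartition_mod_eight (n : ℕ) :
    (overpartition n : ℤ) ≡ (-1) ^ n * overpartition (4 * n) [ZMOD 8] := by
  refine (ZMod.intCast_eq_intCast_iff _ _ 8).1 ?_
  push_cast
  rw [overpartition_four_mul, ← mul_assoc, ← pow_add, ← two_mul, pow_mul, neg_one_sq, one_pow,
    one_mul]
end

section
/- For every positive integer n, p̄(n) ≡ (−1)^n · (−2·c₁(n) + 4·c₂(n)) (mod 8), where c₁(n) equals 1 if n is the square of a positive integer and 0 otherwise, and c₂(n) is the number of ordered pairs (a,b) of positive integers with a² + b² = n. -/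
/-- `c₁ n = 1` if `n` is the square of a positive integer, and `0` otherwise. -/
noncomputable def c₁ (n : ℕ) : ℕ :=
  Set.ncard {a : ℕ | 0 < a ∧ a ^ 2 = n}

/-- The number of ordered pairs of positive integers whose squares sum to `n`. -/
noncomputable def c₂ (n : ℕ) : ℕ :=
  Set.ncard {x : ℕ × ℕ | 0 < x.1 ∧ 0 < x.2 ∧ x.1 ^ 2 + x.2 ^ 2 = n}

open Finset PowerSeries PowerSeries.WithPiTopology

theorem Nat.two_mul_choose_two_add_self (j : ℕ) : 2 * j.choose 2 + j = j ^ 2 := by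
  induction j with
  | zero => rfl
  | succ j ih =>
    rw [Nat.choose_succ_succ', Nat.choose_one_right]
    linear_combination ih

theorem Finset.sum_range_two_mul_add_one {M : Type*} [AddCommMonoid M] (f : ℕ → M) (N : ℕ) :
    ∑ j ∈ range (2 * N + 1), f j = f N + ∑ k ∈ Icc 1 N, (f (N + k) + f (N - k)) := by
  induction N generalizing f with
  | zero => simp
  | succ N ih =>
    rw [show 2 * (N + 1) + 1 = 2 * N + 1 + 1 + 1 by ring, sum_range_succ, sum_range_succ',
      ih (fun j => f (j + 1)), sum_Icc_succ_top (by omega), sum_add_distrib, sum_add_distrib,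
      sum_congr rfl fun k _ => show f (N + k + 1) = f (N + 1 + k) by ring_nf,
      sum_congr rfl fun k (hk : k ∈ Icc 1 N) => show f (N - k + 1) = f (N + 1 - k) by
        rw [Nat.sub_add_comm (mem_Icc.mp hk).2]]
    rw [show 2 * N + 1 + 1 = N + 1 + (N + 1) by ring, Nat.sub_self]
    abel

theorem neg_one_pow_sq_eq_neg_one_pow {M : Type*} [Monoid M] [HasDistribNeg M] (a : ℕ) :
    (-1 : M) ^ a ^ 2 = (-1) ^ a := by
  rcases Nat.even_or_odd a with ha | ha
  · rw [ha.neg_one_pow, (ha.pow_of_ne_zero two_ne_zero).neg_one_pow]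
  · rw [ha.neg_one_pow, ha.pow.neg_one_pow]

section QAnalogues

variable {R : Type*} [CommRing R]

/-- The `q`-Pochhammer symbol `(a; q)_n`. -/
def qPochhammer (a q : R) (n : ℕ) : R :=
  ∏ i ∈ range n, (1 - a * q ^ i)

theorem qPochhammer_succ (a q : R) (n : ℕ) :
    qPochhammer a q (n + 1) = qPochhammer a q n * (1 - a * q ^ n) :=
  prod_range_succ _ _

theorem qPochhammer_neg_mul_qPochhammer (q : R) (n : ℕ) :
    qPochhammer (-q) q n * qPochhammer q q n = qPochhammer (q ^ 2) (q ^ 2) n := by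
  simp only [qPochhammer, ← prod_mul_distrib]
  refine prod_congr rfl fun i _ => ?_
  ring

theorem qPochhammer_mul_qPochhammer_sq (q : R) (n : ℕ) :
    qPochhammer q (q ^ 2) n * qPochhammer (q ^ 2) (q ^ 2) n = qPochhammer q q (2 * n) := by
  induction n with
  | zero => simp [qPochhammer]
  | succ n ih =>
    rw [show 2 * (n + 1) = 2 * n + 1 + 1 by ring, qPochhammer_succ, qPochhammer_succ,
      qPochhammer_succ, qPochhammer_succ, ← ih]
    ring

theorem map_qPochhammer_eq_of_map_eq_zero {S : Type*} [CommRing S] (φ : R →+* S) {a q : R}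
    {k m : ℕ} (hkm : k ≤ m) (h : φ (a * q ^ k) = 0) :
    φ (qPochhammer a q m) = φ (qPochhammer a q k) := by
  induction m, hkm using Nat.le_induction with
  | base => rfl
  | succ m hkm ih =>
    obtain ⟨l, rfl⟩ := Nat.exists_eq_add_of_le hkm
    rw [qPochhammer_succ, map_mul, ih, map_sub, map_one, pow_add, ← mul_assoc, map_mul, h,
      zero_mul, sub_zero, mul_one]

def gaussianBinomial (q : R) : ℕ → ℕ → R
  | _, 0 => 1
  | 0, _ + 1 => 0
  | m + 1, r + 1 => gaussianBinomial q m (r + 1) + q ^ (m - r) * gaussianBinomial q m r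

@[simp]
theorem gaussianBinomial_zero_right (q : R) (m : ℕ) : gaussianBinomial q m 0 = 1 := by
  cases m <;> rfl

theorem gaussianBinomial_succ_succ (q : R) (m r : ℕ) :
    gaussianBinomial q (m + 1) (r + 1) =
      gaussianBinomial q m (r + 1) + q ^ (m - r) * gaussianBinomial q m r :=
  rfl

theorem gaussianBinomial_eq_zero_of_lt (q : R) :
    ∀ {m r : ℕ}, m < r → gaussianBinomial q m r = 0
  | 0, _ + 1, _ => rfl
  | m + 1, r + 1, h => by
    rw [gaussianBinomial_succ_succ, gaussianBinomial_eq_zero_of_lt q (by omega),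
      gaussianBinomial_eq_zero_of_lt q (by omega), mul_zero, add_zero]

@[simp]
theorem gaussianBinomial_self (q : R) : ∀ m : ℕ, gaussianBinomial q m m = 1
  | 0 => rfl
  | m + 1 => by
    rw [gaussianBinomial_succ_succ, gaussianBinomial_eq_zero_of_lt q (Nat.lt_succ_self m),
      gaussianBinomial_self q m]
    simp

theorem gaussianBinomial_mul_qPochhammer (q : R) :
    ∀ {m r : ℕ}, r ≤ m →
      gaussianBinomial q m r * qPochhammer q q r * qPochhammer q q (m - r) = qPochhammer q q m
  | m, 0, _ => by simp [qPochhammer]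
  | m + 1, r + 1, h => by
    obtain rfl | hr := (Nat.le_of_succ_le_succ h).eq_or_lt
    · simp [qPochhammer]
    obtain ⟨s, rfl⟩ := Nat.exists_eq_add_of_lt hr
    have ih₁ := gaussianBinomial_mul_qPochhammer q (m := r + s + 1) (r := r + 1) (by omega)
    have ih₀ := gaussianBinomial_mul_qPochhammer q (m := r + s + 1) (r := r) (by omega)
    have hexp : q ^ (s + 1) * q ^ r = q ^ (r + s + 1) := by rw [← pow_add]; ring_nf
    rw [show r + s + 1 - (r + 1) = s by omega, qPochhammer_succ] at ih₁
    rw [show r + s + 1 - r = s + 1 by omega, qPochhammer_succ] at ih₀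
    rw [show r + s + 1 + 1 - (r + 1) = s + 1 by omega, gaussianBinomial_succ_succ,
      show r + s + 1 - r = s + 1 by omega, qPochhammer_succ, qPochhammer_succ, qPochhammer_succ]
    -- `(1 - q ^ (s + 1)) + q ^ (s + 1) (1 - q ^ (r + 1)) = 1 - q ^ (r + s + 2)`
    linear_combination (1 - q * q ^ s) * ih₁ + q ^ (s + 1) * (1 - q * q ^ r) * ih₀
      - q * qPochhammer q q (r + s + 1) * hexp

theorem gaussianBinomial_term_succ (q z w : R) {m j : ℕ} (hj : j ≤ m) :
    (-1) ^ (j + 1) * q ^ (j + 1).choose 2 * gaussianBinomial q (m + 1) (j + 1) * z ^ (j + 1) *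
        w ^ (m + 1 - (j + 1)) =
      w * ((-1) ^ (j + 1) * q ^ (j + 1).choose 2 * gaussianBinomial q m (j + 1) * z ^ (j + 1) *
        w ^ (m - (j + 1))) -
      z * q ^ m * ((-1) ^ j * q ^ j.choose 2 * gaussianBinomial q m j * z ^ j * w ^ (m - j)) := by
  have hexp : q ^ (j + 1).choose 2 * q ^ (m - j) = q ^ j.choose 2 * q ^ m := by
    have hc : (j + 1).choose 2 = j + j.choose 2 := by
      rw [Nat.choose_succ_succ', Nat.choose_one_right]
    rw [← pow_add, ← pow_add, hc]
    congr 1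
    omega
  have hw : w * (gaussianBinomial q m (j + 1) * w ^ (m - (j + 1))) =
      gaussianBinomial q m (j + 1) * w ^ (m - j) := by
    obtain rfl | hj := hj.eq_or_lt
    · simp [gaussianBinomial_eq_zero_of_lt]
    · rw [show m - j = m - (j + 1) + 1 by omega, pow_succ]
      ring
  rw [Nat.add_sub_add_right, gaussianBinomial_succ_succ]
  linear_combination -(-1) ^ (j + 1) * q ^ (j + 1).choose 2 * z ^ (j + 1) * hw
    + (-1) ^ (j + 1) * gaussianBinomial q m j * z ^ (j + 1) * w ^ (m - j) * hexp

/-- The `q`-binomial theorem, in homogeneous form. -/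
theorem prod_range_sub_mul_pow_eq_sum (q z w : R) (m : ℕ) :
    ∏ i ∈ range m, (w - z * q ^ i) =
      ∑ j ∈ range (m + 1),
        (-1) ^ j * q ^ j.choose 2 * gaussianBinomial q m j * z ^ j * w ^ (m - j) := by
  induction m with
  | zero => simp
  | succ m ih =>
    rw [sum_range_succ', sum_congr rfl fun j hj =>
      gaussianBinomial_term_succ q z w (Nat.lt_succ_iff.mp (mem_range.mp hj)),
      sum_sub_distrib, ← mul_sum, ← mul_sum, prod_range_succ, ih]
    have htop := (sum_range_succ' (fun j => (-1) ^ j * q ^ j.choose 2 *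
      gaussianBinomial q m j * z ^ j * w ^ (m - j)) (m + 1)).symm.trans
      (sum_range_succ _ (m + 1))
    simp only [gaussianBinomial_eq_zero_of_lt q (Nat.lt_succ_self m), pow_zero,
      Nat.choose_zero_succ, gaussianBinomial_zero_right, Nat.sub_zero, mul_zero, zero_mul,
      add_zero] at htop ⊢
    linear_combination -w * htop

theorem prod_range_two_mul_sub_mul_sq_pow (q : R) (N : ℕ) :
    ∏ i ∈ range (2 * N), (q ^ (2 * N) - q * (q ^ 2) ^ i) =
      (-1) ^ N * q ^ (3 * N ^ 2) * qPochhammer q (q ^ 2) N ^ 2 := by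
  have hodd : ∀ n, ∏ i ∈ range n, q * (q ^ 2) ^ i = q ^ n ^ 2 := by
    intro n
    induction n with
    | zero => simp
    | succ n ih => rw [prod_range_succ, ih]; ring
  have hlow : ∀ i ∈ range N, q ^ (2 * N) - q * (q ^ 2) ^ i =
      -1 * (q * (q ^ 2) ^ i) * (1 - q * (q ^ 2) ^ (N - 1 - i)) := by
    intro i hi
    have : (q ^ 2) ^ i * (q ^ 2) ^ (N - 1 - i) * q ^ 2 = q ^ (2 * N) := by
      rw [← pow_add, ← pow_succ, ← pow_mul]
      have := mem_range.mp hi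
      congr 1
      omega
    linear_combination -this
  have hhigh : ∀ i ∈ range N, q ^ (2 * N) - q * (q ^ 2) ^ (N + i) =
      q ^ (2 * N) * (1 - q * (q ^ 2) ^ i) := by
    intro i _
    rw [pow_add, ← pow_mul]
    ring
  rw [two_mul, prod_range_add, ← two_mul, prod_congr rfl hlow, prod_congr rfl hhigh,
    prod_mul_distrib, prod_mul_distrib (f := fun _ => (-1 : R)), hodd, prod_mul_distrib,
    prod_range_reflect (fun i => 1 - q * (q ^ 2) ^ i), prod_const, prod_const, card_range]
  simp only [qPochhammer]
  ring

theorem neg_one_pow_mul_sq_pow_choose_two_mul_pow (q : R) {N k j : ℕ} (hk : k ≤ N)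
    (hj : j = N + k ∨ j = N - k) :
    (-1) ^ j * (q ^ 2) ^ j.choose 2 * q ^ j * (q ^ (2 * N)) ^ (2 * N - j) =
      (-1) ^ N * q ^ (3 * N ^ 2) * ((-1) ^ k * q ^ k ^ 2) := by
  have hexp : 2 * j.choose 2 + j + 2 * N * (2 * N - j) = 3 * N ^ 2 + k ^ 2 := by
    rw [Nat.two_mul_choose_two_add_self]
    obtain ⟨l, rfl⟩ := Nat.exists_eq_add_of_le hk
    rcases hj with rfl | rfl
    · rw [show 2 * (k + l) - (k + l + k) = l by omega]
      ring
    · rw [Nat.add_sub_cancel_left, show 2 * (k + l) - l = 2 * k + l by omega]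
      ring
  have hsign : (-1 : R) ^ j = (-1) ^ (N + k) := by
    rw [neg_one_pow_eq_pow_mod_two, neg_one_pow_eq_pow_mod_two (N + k)]
    congr 1
    omega
  rw [hsign, ← pow_mul, mul_assoc _ _ (q ^ j), ← pow_add, mul_assoc, ← pow_mul, ← pow_add, hexp]
  ring

/-- Finite form of Gauss's identity: the `q`-binomial theorem for `z = q` and `w = q ^ (2 N)` in
base `q ^ 2`, divided by `(-1) ^ N q ^ (3 N ^ 2)`. -/
theorem qPochhammer_sq_eq_sum_gaussianBinomial [IsDomain R] {q : R} (hq : q ≠ 0) (N : ℕ) :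
    qPochhammer q (q ^ 2) N ^ 2 =
      gaussianBinomial (q ^ 2) (2 * N) N +
        ∑ k ∈ Icc 1 N, (-1) ^ k * q ^ k ^ 2 *
          (gaussianBinomial (q ^ 2) (2 * N) (N + k) +
            gaussianBinomial (q ^ 2) (2 * N) (N - k)) := by
  have hbin := prod_range_sub_mul_pow_eq_sum (q ^ 2) q (q ^ (2 * N)) (2 * N)
  rw [prod_range_two_mul_sub_mul_sq_pow, sum_range_two_mul_add_one] at hbin
  refine mul_left_cancel₀ (mul_ne_zero (pow_ne_zero _ (neg_ne_zero.mpr one_ne_zero))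
    (pow_ne_zero _ hq)) (hbin.trans ?_)
  rw [mul_add, mul_sum]
  congr 1
  · have := neg_one_pow_mul_sq_pow_choose_two_mul_pow q (Nat.zero_le N) (j := N) (by simp)
    simp only [pow_zero, one_mul] at this
    linear_combination gaussianBinomial (q ^ 2) (2 * N) N * this
  · refine sum_congr rfl fun k hk => ?_
    have hk := (mem_Icc.mp hk).2
    linear_combination
      gaussianBinomial (q ^ 2) (2 * N) (N + k) *
        neg_one_pow_mul_sq_pow_choose_two_mul_pow q hk (Or.inl rfl) +
      gaussianBinomial (q ^ 2) (2 * N) (N - k) *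
        neg_one_pow_mul_sq_pow_choose_two_mul_pow q hk (Or.inr rfl)

end QAnalogues

section Truncation

variable {R : Type*} [CommRing R]

noncomputable abbrev modXPow (n : ℕ) : R⟦X⟧ →+* R⟦X⟧ ⧸ Ideal.span {(X : R⟦X⟧) ^ (n + 1)} :=
  Ideal.Quotient.mk _

theorem modXPow_eq_modXPow_iff {n : ℕ} {f g : R⟦X⟧} :
    modXPow n f = modXPow n g ↔ ∀ m ≤ n, coeff m f = coeff m g := by
  simp [Ideal.Quotient.mk_eq_mk_iff_sub_mem, Ideal.mem_span_singleton, X_pow_dvd_iff,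
    sub_eq_zero]

theorem PowerSeries.ext_modXPow {f g : R⟦X⟧} (h : ∀ n, modXPow n f = modXPow n g) : f = g :=
  ext fun n => modXPow_eq_modXPow_iff.mp (h n) n le_rfl

theorem modXPow_X_pow {n m : ℕ} (h : n < m) : modXPow n (X ^ m : R⟦X⟧) = 0 := by
  rw [Ideal.Quotient.eq_zero_iff_mem, Ideal.mem_span_singleton]
  exact pow_dvd_pow X h

theorem modXPow_eq_of_hasProd [TopologicalSpace R] [T2Space R] {f : ℕ → R⟦X⟧} {a : R⟦X⟧}
    (hf : HasProd f a) {n k : ℕ} (h : ∀ i, k ≤ i → modXPow n (f i) = 1) :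
    modXPow n a = modXPow n (∏ i ∈ range k, f i) := by
  have hstable : ∀ s ⊇ range k, modXPow n (∏ i ∈ s, f i) = modXPow n (∏ i ∈ range k, f i) := by
    intro s hs
    rw [← prod_sdiff hs, map_mul, map_prod, prod_eq_one fun i hi => h i ?_, one_mul]
    simpa using (mem_sdiff.mp hi).2
  refine modXPow_eq_modXPow_iff.mpr fun m hm => tendsto_nhds_unique
    (((WithPiTopology.continuous_coeff R m).tendsto a).comp hf) ?_
  exact tendsto_atTop_of_eventually_const fun s hs =>
    modXPow_eq_modXPow_iff.mp (hstable s hs) m hm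

theorem modXPow_gaussianBinomial_mul_qPochhammer {n m j : ℕ} (h₁ : n ≤ j) (h₂ : j + n ≤ m) :
    modXPow n (gaussianBinomial (X ^ 2 : R⟦X⟧) m j) *
      modXPow n (qPochhammer (X ^ 2 : R⟦X⟧) (X ^ 2) n) = 1 := by
  have hstable : ∀ r, n ≤ r → modXPow n (qPochhammer (X ^ 2 : R⟦X⟧) (X ^ 2) r) =
      modXPow n (qPochhammer (X ^ 2 : R⟦X⟧) (X ^ 2) n) := fun r hr =>
    map_qPochhammer_eq_of_map_eq_zero _ hr
      (by rw [← pow_succ', ← pow_mul]; exact modXPow_X_pow (by omega))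
  have hunit : IsUnit (modXPow n (qPochhammer (X ^ 2 : R⟦X⟧) (X ^ 2) n)) :=
    (isUnit_iff_constantCoeff.mpr (by simp [qPochhammer])).map _
  have h := congrArg (modXPow n) (gaussianBinomial_mul_qPochhammer (X ^ 2 : R⟦X⟧) (m := m) (r := j)
    (by omega))
  rw [map_mul, map_mul, hstable j h₁, hstable (m - j) (by omega), hstable m (by omega)] at h
  exact hunit.mul_left_injective (by beta_reduce; rw [h, one_mul])

end Truncation

theorem mk_overpartition (R : Type*) [CommSemiring R] :
    (mk fun n => (overpartition n : R)) =
      (mk fun n => ((Nat.Partition.distincts n).card : R)) *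
        mk fun n => (Fintype.card n.Partition : R) := by
  ext n
  simp [overpartition, coeff_mul, Nat.sum_antidiagonal_eq_sum_range_succ_mk]

section GeneratingFunctions

variable (R : Type*) [CommRing R] [TopologicalSpace R] [T2Space R]

theorem hasProd_one_add_X_pow :
    HasProd (fun i => (1 + X ^ (i + 1) : R⟦X⟧))
      (mk fun n => ((Nat.Partition.distincts n).card : R)) := by
  simp_rw [← Nat.Partition.countRestricted_two]
  convert Nat.Partition.hasProd_powerSeriesMk_card_countRestricted R two_pos using 2 with i
  · rfl
  · rw [show 2 = 1 + 1 from rfl, sum_range_succ, sum_range_one]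
    simp

theorem mk_card_partition_mul_tprod_one_sub_X_pow [IsTopologicalRing R] :
    (mk fun n => (Fintype.card n.Partition : R)) * ∏' i, (1 - X ^ (i + 1) : R⟦X⟧) = 1 := by
  have hP := Nat.Partition.hasProd_powerSeriesMk_card_restricted R (fun _ => True)
  simp only [if_true, Nat.Partition.restricted, implies_true, filter_true, card_univ] at hP
  refine (hP.mul (multipliable_one_sub_X_pow R).hasProd).unique ?_
  convert hasProd_one with i
  simp_rw [pow_mul]
  exact tsum_pow_mul_one_sub_of_constantCoeff_eq_zero (by simp)

end GeneratingFunctions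

theorem c₁_eq_card {m N : ℕ} (h : m ≤ N) : c₁ m = #{a ∈ Icc 1 N | a ^ 2 = m} := by
  rw [c₁, ← Set.ncard_coe_finset]
  congr 1
  ext a
  simp only [Set.mem_ofPred_eq, coe_filter, mem_Icc]
  constructor
  · rintro ⟨ha, rfl⟩
    exact ⟨⟨ha, (Nat.le_self_pow two_ne_zero a).trans h⟩, rfl⟩
  · rintro ⟨⟨ha, -⟩, rfl⟩
    exact ⟨ha, rfl⟩

theorem c₂_eq_sum_antidiagonal (n : ℕ) : c₂ n = ∑ p ∈ antidiagonal n, c₁ p.1 * c₁ p.2 := by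
  have hc₂ : c₂ n = #{x ∈ Icc 1 n ×ˢ Icc 1 n | x.1 ^ 2 + x.2 ^ 2 = n} := by
    rw [c₂, ← Set.ncard_coe_finset]
    congr 1
    ext ⟨a, b⟩
    simp only [Set.mem_ofPred_eq, coe_filter, mem_product, mem_Icc]
    have := Nat.le_self_pow two_ne_zero a
    have := Nat.le_self_pow two_ne_zero b
    constructor
    · rintro ⟨ha, hb, h⟩
      exact ⟨⟨⟨ha, by omega⟩, ⟨hb, by omega⟩⟩, h⟩
    · rintro ⟨⟨⟨ha, -⟩, ⟨hb, -⟩⟩, h⟩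
      exact ⟨ha, hb, h⟩
  rw [hc₂, card_eq_sum_card_fiberwise (f := fun x => (x.1 ^ 2, x.2 ^ 2)) (t := antidiagonal n)]
  · refine sum_congr rfl fun p hp => ?_
    rw [HasAntidiagonal.mem_antidiagonal] at hp
    rw [c₁_eq_card (by omega : p.1 ≤ n), c₁_eq_card (by omega : p.2 ≤ n), ← card_product]
    congr 1
    ext ⟨a, b⟩
    simp only [mem_filter, mem_product, Prod.ext_iff]
    constructor
    · rintro ⟨⟨⟨ha, hb⟩, -⟩, h₁, h₂⟩
      exact ⟨⟨ha, h₁⟩, ⟨hb, h₂⟩⟩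
    · rintro ⟨⟨ha, h₁⟩, ⟨hb, h₂⟩⟩
      exact ⟨⟨⟨ha, hb⟩, by rw [h₁, h₂, hp]⟩, h₁, h₂⟩
  · intro x hx
    exact HasAntidiagonal.mem_antidiagonal.mpr (mem_filter.mp hx).2

/-- `∑_{k ≥ 1} (-1) ^ k X ^ (k ^ 2)`, so that `1 + 2 * signedSquares` is the theta series
`∑_{k ∈ ℤ} (-1) ^ k X ^ (k ^ 2)`. -/
noncomputable def signedSquares : ℤ⟦X⟧ :=
  mk fun m => (-1) ^ m * c₁ m

theorem coeff_signedSquares (n : ℕ) : coeff n signedSquares = (-1) ^ n * (c₁ n : ℤ) :=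
  coeff_mk _ _

theorem coeff_signedSquares_sq (n : ℕ) :
    coeff n (signedSquares ^ 2) = (-1) ^ n * (c₂ n : ℤ) := by
  rw [sq, coeff_mul, c₂_eq_sum_antidiagonal, Nat.cast_sum, mul_sum]
  refine sum_congr rfl fun p hp => ?_
  rw [← HasAntidiagonal.mem_antidiagonal.mp hp, coeff_signedSquares, coeff_signedSquares, pow_add]
  push_cast
  ring

theorem modXPow_signedSquares {n N : ℕ} (h : n ≤ N) :
    modXPow n signedSquares = modXPow n (∑ k ∈ Icc 1 N, (-1) ^ k * X ^ k ^ 2 : ℤ⟦X⟧) := by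
  refine modXPow_eq_modXPow_iff.mpr fun m hm => ?_
  have hsign : ∀ k : ℕ, ((-1) ^ k : ℤ⟦X⟧) = C ((-1) ^ k) := by simp
  simp only [signedSquares, coeff_mk, map_sum, hsign, coeff_C_mul, coeff_X_pow,
    c₁_eq_card (hm.trans h), card_eq_sum_ones, Nat.cast_sum, mul_sum, sum_filter]
  refine sum_congr rfl fun k _ => ?_
  split_ifs with h₁ h₂ h₂
  · rw [← h₁, neg_one_pow_sq_eq_neg_one_pow]
    simp
  · exact absurd h₁.symm h₂
  · exact absurd h₂.symm h₁
  · simp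

theorem modXPow_qPochhammer_sq_mul (n : ℕ) :
    modXPow n (qPochhammer X (X ^ 2) (2 * n) ^ 2) *
      modXPow n (qPochhammer (X ^ 2 : ℤ⟦X⟧) (X ^ 2) n) = modXPow n (1 + 2 * signedSquares) := by
  set N := 2 * n with hN
  set e := modXPow n (qPochhammer (X ^ 2 : ℤ⟦X⟧) (X ^ 2) n)
  have hterm : ∀ k ∈ Icc 1 N, modXPow n ((-1) ^ k * X ^ k ^ 2 *
      (gaussianBinomial (X ^ 2) (2 * N) (N + k) + gaussianBinomial (X ^ 2) (2 * N) (N - k))) * e =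
      2 * modXPow n ((-1) ^ k * X ^ k ^ 2) := by
    intro k hk
    by_cases hkn : k ≤ n
    · rw [map_mul, map_add, mul_assoc, add_mul,
        modXPow_gaussianBinomial_mul_qPochhammer (by omega) (by omega),
        modXPow_gaussianBinomial_mul_qPochhammer (by omega) (by omega)]
      ring
    · have : modXPow n (X ^ k ^ 2 : ℤ⟦X⟧) = 0 :=
        modXPow_X_pow ((not_le.mp hkn).trans_le (Nat.le_self_pow two_ne_zero k))
      simp [this]
  rw [map_add, map_one, map_mul, modXPow_signedSquares (show n ≤ N by omega),
    qPochhammer_sq_eq_sum_gaussianBinomial X_ne_zero, map_add, add_mul,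
    modXPow_gaussianBinomial_mul_qPochhammer (by omega) (by omega), map_sum, sum_mul,
    sum_congr rfl hterm, ← mul_sum, map_ofNat, map_sum]

theorem modXPow_one_add_two_mul_signedSquares_mul (n : ℕ) :
    modXPow n (1 + 2 * signedSquares) * modXPow n (qPochhammer (-X) X n) =
      modXPow n (qPochhammer X X n) := by
  have hodd : modXPow n (qPochhammer (X : ℤ⟦X⟧) (X ^ 2) (2 * n)) =
      modXPow n (qPochhammer (X : ℤ⟦X⟧) (X ^ 2) n) :=
    map_qPochhammer_eq_of_map_eq_zero _ (by omega)
      (by rw [← pow_mul, ← pow_succ']; exact modXPow_X_pow (by omega))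
  have hall : modXPow n (qPochhammer (X : ℤ⟦X⟧) X (2 * n)) = modXPow n (qPochhammer X X n) :=
    map_qPochhammer_eq_of_map_eq_zero _ (by omega)
      (by rw [← pow_succ']; exact modXPow_X_pow (by omega))
  have h₁ := congrArg (modXPow n) (qPochhammer_neg_mul_qPochhammer (X : ℤ⟦X⟧) n)
  have h₂ := congrArg (modXPow n) (qPochhammer_mul_qPochhammer_sq (X : ℤ⟦X⟧) n)
  rw [map_mul] at h₁ h₂
  rw [hall] at h₂
  rw [← modXPow_qPochhammer_sq_mul, map_pow, hodd]
  set o := modXPow n (qPochhammer (X : ℤ⟦X⟧) (X ^ 2) n)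
  set g := modXPow n (qPochhammer (-X : ℤ⟦X⟧) X n)
  linear_combination o * h₁ + (1 + o * g) * h₂

/-- Gauss's identity `∑_{k ∈ ℤ} (-1) ^ k X ^ (k ^ 2) = ∏_{i ≥ 1} (1 - X ^ i) / (1 + X ^ i)`. -/
theorem one_add_two_mul_signedSquares_mul_tprod :
    (1 + 2 * signedSquares) * ∏' i, (1 + X ^ (i + 1) : ℤ⟦X⟧) = ∏' i, (1 - X ^ (i + 1) : ℤ⟦X⟧) := by
  refine ext_modXPow fun n => ?_
  have hplus : modXPow n (∏' i, (1 + X ^ (i + 1) : ℤ⟦X⟧)) = modXPow n (qPochhammer (-X) X n) := by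
    rw [modXPow_eq_of_hasProd (hasProd_one_add_X_pow ℤ).multipliable.hasProd (k := n)
      fun i hi => by simp [modXPow_X_pow (show n < i + 1 by omega)], qPochhammer]
    exact congrArg _ (prod_congr rfl fun i _ => by ring)
  have hminus : modXPow n (∏' i, (1 - X ^ (i + 1) : ℤ⟦X⟧)) = modXPow n (qPochhammer X X n) := by
    rw [modXPow_eq_of_hasProd (multipliable_one_sub_X_pow ℤ).hasProd (k := n)
      fun i hi => by simp [modXPow_X_pow (show n < i + 1 by omega)], qPochhammer]
    exact congrArg _ (prod_congr rfl fun i _ => by ring)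
  rw [map_mul, hplus, hminus, modXPow_one_add_two_mul_signedSquares_mul]

theorem one_add_two_mul_signedSquares_mul_mk_overpartition :
    (1 + 2 * signedSquares) * mk (fun n => (overpartition n : ℤ)) = 1 := by
  rw [mk_overpartition, ← (hasProd_one_add_X_pow ℤ).tprod_eq, ← mul_assoc,
    one_add_two_mul_signedSquares_mul_tprod, mul_comm, mk_card_partition_mul_tprod_one_sub_X_pow]

theorem overpartition_two_adic_mod_eight (n : ℕ) (hn : 0 < n) :
    (overpartition n : ℤ) ≡ (-1) ^ n * (-2 * c₁ n + 4 * c₂ n) [ZMOD 8] := by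
  set P := mk fun n => (overpartition n : ℤ)
  have hP : P = 1 - (2 : ℤ) • signedSquares + (4 : ℤ) • signedSquares ^ 2 -
      (8 : ℤ) • (signedSquares ^ 3 * P) := by
    linear_combination (1 - 2 * signedSquares + 4 * signedSquares ^ 2) *
      one_add_two_mul_signedSquares_mul_mk_overpartition
  have hcoeff := congrArg (coeff n) hP
  simp only [map_sub, map_add, map_zsmul, smul_eq_mul, coeff_one, if_neg hn.ne',
    coeff_signedSquares, coeff_signedSquares_sq, P, coeff_mk] at hcoeff
  refine Int.modEq_iff_dvd.mpr ⟨coeff n (signedSquares ^ 3 * P), ?_⟩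
  rw [hcoeff]
  ring
end
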